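/- (Cumulative variance bound, Eq. (28) in the proof of Theorem 6.) Under the oracle assumption with c₀c₁ ≥ 1 and with F_{t−1}-measurable query probabilities p_t ∈ [β, τ], the cumulative conditional variance satisfies, for every t: Σ_{s=1}^t σ_s² ≤ c₀c₁ · σ*²_{1:t} + c₀ · Regret_t(p*_{1:t}) almost surely, where σ_s² := E[(g_s − μ_y)² | F_{s−1}], σ*²_{1:t} := Σ_{s=1}^t σ*²_{s,(t)}, and Regret_t(p*_{1:t}) := Σ_{s=1}^t Φ_s(x_s)/p_s − Σ_{s=1}^t Φ_s(x_s)/p*_{1:t}. -/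

import Mathlib

/-
STATEMENT 12 (Cumulative variance bound, Eq. (28) in the proof of Theorem 6): Under the
oracle assumption with c₀c₁ ≥ 1 and with F_{t−1}-measurable query probabilities p_t ∈ [β, τ],
the cumulative conditional variance satisfies, for every t:
Σ_{s=1}^t σ_s² ≤ c₀c₁ · σ*²_{1:t} + c₀ · Regret_t(p*_{1:t}) almost surely, where
σ_s² := E[(g_s − μ_y)² | F_{s−1}], σ*²_{1:t} := Σ_{s=1}^t σ*²_{s,(t)}, and
Regret_t(p*_{1:t}) := Σ_{s=1}^t Φ_s(x_s)/p_s − Σ_{s=1}^t Φ_s(x_s)/p*_{1:t}.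
-/

open MeasureTheory ProbabilityTheory

/-- The setting of sequential active mean estimation with an `ℱ (t-1)`-measurable query
probability `p t ∈ [β, τ]` and a variance oracle `Φ t` (representing `Φ_t(x_t)`) satisfying
`(1/c₁) Φ_t(x_t) ≤ E[(y_t − f_t(x_t))² | ℱ_{t−1}] ≤ c₀ Φ_t(x_t)` a.s. with `c₀ c₁ ≥ 1` and
`0 ≤ Φ_t(x_t) ≤ B`. -/
structure ActiveQuerySetup (Ω : Type*) [m0 : MeasurableSpace Ω] where
  μ : Measure Ω
  isProb : IsProbabilityMeasure μ
  ℱ : Filtration ℕ m0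
  T : ℕ
  β : ℝ
  τ : ℝ
  hβ : 0 < β
  hβτ : β ≤ τ
  hτ : τ ≤ 1
  x : ℕ → Ω → ℝ
  y : ℕ → Ω → ℝ
  f : ℕ → Ω → ℝ → ℝ
  p : ℕ → Ω → ℝ
  ξ : ℕ → Ω → ℝ
  Φ : ℕ → Ω → ℝ
  c₀ : ℝ
  c₁ : ℝ
  B : ℝ
  /-- `(x t, y t)` is `ℱ t`-measurable. -/
  hx : ∀ t, Measurable[ℱ t] (x t)
  hy : ∀ t, Measurable[ℱ t] (y t)
  hξmeas : ∀ t, Measurable[ℱ t] (ξ t)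
  /-- the prediction model `f t` is an `ℱ (t-1)`-measurable random function -/
  hf : ∀ t, @Measurable (Ω × ℝ) ℝ ((ℱ (t - 1)).prod (borel ℝ)) _ (Function.uncurry (f t))
  /-- the query probability `p t` is `ℱ (t-1)`-measurable -/
  hpmeas : ∀ t, Measurable[ℱ (t - 1)] (p t)
  /-- the query probability lies in `[β, τ]` -/
  hpmem : ∀ t ω, p t ω ∈ Set.Icc β τ
  /-- `(x t, y t)` is independent of `ℱ (t-1)` -/
  hindep : ∀ t,
    Indep (MeasurableSpace.comap (fun ω => (x t ω, y t ω)) inferInstance) (ℱ (t - 1)) μ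
  /-- the pairs `(x t, y t)` are identically distributed -/
  hident : ∀ s t,
    Measure.map (fun ω => (x s ω, y s ω)) μ = Measure.map (fun ω => (x t ω, y t ω)) μ
  /-- `ξ t` is `{0,1}`-valued -/
  hξ01 : ∀ t, ∀ᵐ ω ∂μ, ξ t ω = 0 ∨ ξ t ω = 1
  /-- conditionally on `ℱ (t-1)` and `(x t, y t)`, the indicator `ξ t` has conditional mean
  `p t`: it is `Bernoulli (p t)` given the past and `x t`, and conditionally independent of
  `y t` given the past and `x t`. -/
  hξcond : ∀ t,
    μ[ξ t | (ℱ (t - 1)) ⊔ MeasurableSpace.comap (fun ω => (x t ω, y t ω)) inferInstance]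
      =ᵐ[μ] p t
  /-- the oracle output at time `t` is `ℱ t`-measurable -/
  hΦmeas : ∀ t, Measurable[ℱ t] (Φ t)
  hc₀ : 0 < c₀
  hc₁ : 0 < c₁
  hc₀c₁ : 1 ≤ c₀ * c₁
  hB : 0 < B
  /-- the oracle output is nonnegative and bounded by `B` -/
  hΦ_nonneg : ∀ t ω, 0 ≤ Φ t ω
  hΦ_le : ∀ t ω, Φ t ω ≤ B
  /-- the oracle approximates the conditional variance of the model residual from below -/
  horacle_lo : ∀ t, ∀ᵐ ω ∂μ,
    (1 / c₁) * Φ t ω ≤ (μ[fun ω' => (y t ω' - f t ω' (x t ω')) ^ 2 | ℱ (t - 1)]) ω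
  /-- and from above -/
  horacle_hi : ∀ t, ∀ᵐ ω ∂μ,
    (μ[fun ω' => (y t ω' - f t ω' (x t ω')) ^ 2 | ℱ (t - 1)]) ω ≤ c₀ * Φ t ω
  /-- integrability of the labels -/
  hyint : ∀ t, Integrable (y t) μ
  /-- integrability of the update direction -/
  hgint : ∀ t, Integrable
    (fun ω => f t ω (x t ω) + (y t ω - f t ω (x t ω)) * ξ t ω / p t ω) μ
  /-- square-integrability conditions -/
  hf2int : ∀ t, Integrable (fun ω => (f t ω (x t ω)) ^ 2) μ
  hr2int : ∀ t, Integrable (fun ω => (y t ω - f t ω (x t ω)) ^ 2) μ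
  hfrint : ∀ t, Integrable (fun ω => f t ω (x t ω) * (y t ω - f t ω (x t ω))) μ
  hg2int : ∀ t, Integrable
    (fun ω => (f t ω (x t ω) + (y t ω - f t ω (x t ω)) * ξ t ω / p t ω) ^ 2) μ

variable {Ω : Type*} [MeasurableSpace Ω]

/-- the update direction `g_t = f_t(x_t) + (y_t − f_t(x_t)) ξ_t / p_t` -/
noncomputable def g (S : ActiveQuerySetup Ω) (t : ℕ) (ω : Ω) : ℝ :=
  S.f t ω (S.x t ω) + (S.y t ω - S.f t ω (S.x t ω)) * S.ξ t ω / S.p t ω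

/-- the common mean `μ_y = E[y_t]` of the labels -/
noncomputable def μy (S : ActiveQuerySetup Ω) : ℝ := ∫ ω, S.y 1 ω ∂S.μ

/-- the conditional variance `σ_t² = E[(g_t − μ_y)² | ℱ_{t−1}]` -/
noncomputable def condVar (S : ActiveQuerySetup Ω) (t : ℕ) : Ω → ℝ :=
  S.μ[fun ω => (g S t ω - μy S) ^ 2 | S.ℱ (t - 1)]

/-- `σ*²_{s,(t)}`: the conditional variance of `g_s` computed as if the fixed hindsight query
probability `p*_{1:t}` had been used in place of `p_s`, i.e.
`E[f_s(x_s)² | ℱ_{s−1}] + (1/p*_{1:t}) E[(y_s − f_s(x_s))² | ℱ_{s−1}]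
 + 2 E[f_s(x_s)(y_s − f_s(x_s)) | ℱ_{s−1}] − μ_y²`. -/
noncomputable def sigmaStarSq (S : ActiveQuerySetup Ω) (pstar : ℕ → Ω → ℝ) (s t : ℕ)
    (ω : Ω) : ℝ :=
  (S.μ[fun ω' => (S.f s ω' (S.x s ω')) ^ 2 | S.ℱ (s - 1)]) ω
    + (1 / pstar t ω) * (S.μ[fun ω' => (S.y s ω' - S.f s ω' (S.x s ω')) ^ 2 | S.ℱ (s - 1)]) ω
    + 2 * (S.μ[fun ω' => S.f s ω' (S.x s ω') * (S.y s ω' - S.f s ω' (S.x s ω'))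
        | S.ℱ (s - 1)]) ω
    - (μy S) ^ 2

/-- `p*_{1:t} = argmin_{p ∈ [β,τ]} Σ_{s=1}^t Φ_s(x_s)/p`: the best fixed query probability in
hindsight over the first `t` rounds. -/
def IsHindsightBest (S : ActiveQuerySetup Ω) (pstar : ℕ → Ω → ℝ) : Prop :=
  ∀ t ω, pstar t ω ∈ Set.Icc S.β S.τ ∧
    ∀ q ∈ Set.Icc S.β S.τ,
      (∑ s ∈ Finset.Icc 1 t, S.Φ s ω / pstar t ω) ≤ ∑ s ∈ Finset.Icc 1 t, S.Φ s ω / q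

/-!
Conditioning first on the past together with the current sample `(x_s, y_s)`, the query
indicator `ξ_s` averages to `p_s`, so with `E_s := E[(y_s − f_s(x_s))² | ℱ_{s−1}]`
`σ_s² = E[(y_s − μ_y)² | ℱ_{s−1}] + (1/p_s − 1) E_s`, while `σ*²_{s,(t)}` is the same
expression with `p*_{1:t}` in place of `p_s`. Since `E_s` lies between `Φ_s / c₁` and
`c₀ Φ_s`, each round satisfies `σ_s² ≤ c₀c₁ σ*²_{s,(t)} + c₀ (Φ_s/p_s − Φ_s/p*_{1:t})`;
sum over `s`.
-/

section InversePropensity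

variable {α : Type*} {m G m₀ : MeasurableSpace α} {μ : Measure[m₀] α} [IsFiniteMeasure μ]
  {a b p ξ : α → ℝ}

theorem condExp_sq_add_mul_div_ae_eq (hG : G ≤ m₀) (ha : Measurable[G] a)
    (hb : Measurable[G] b) (hp : Measurable[G] p) (hp0 : ∀ ω, p ω ≠ 0)
    (hξ : AEStronglyMeasurable ξ μ) (hξ01 : ∀ᵐ ω ∂μ, ξ ω = 0 ∨ ξ ω = 1)
    (hξG : μ[ξ | G] =ᵐ[μ] p) (ha2 : Integrable (fun ω => a ω ^ 2) μ)
    (hg2 : Integrable (fun ω => (a ω + b ω * ξ ω / p ω) ^ 2) μ) :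
    μ[fun ω => (a ω + b ω * ξ ω / p ω) ^ 2 | G] =ᵐ[μ]
      fun ω => (a ω + b ω) ^ 2 + ((p ω)⁻¹ - 1) * b ω ^ 2 := by
  set k : α → ℝ := fun ω => 2 * a ω * b ω / p ω + b ω ^ 2 / p ω ^ 2
  -- `ξ² = ξ` makes the square affine in `ξ`
  have hsplit :
      (fun ω => (a ω + b ω * ξ ω / p ω) ^ 2) =ᵐ[μ] (fun ω => a ω ^ 2) + k * ξ := by
    filter_upwards [hξ01] with ω hω
    rcases hω with hω | hω <;> simp only [Pi.add_apply, Pi.mul_apply, k, hω] <;> ring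
  have hkξ : Integrable (k * ξ) μ :=
    (hg2.sub ha2).congr
      (hsplit.mono fun ω hω => by simp only [Pi.sub_apply, hω, Pi.add_apply]; ring)
  have hξint : Integrable ξ μ :=
    .of_bound hξ 1 (hξ01.mono fun ω hω => by rcases hω with hω | hω <;> simp [hω])
  have hk : StronglyMeasurable[G] k := by
    simp only [k]
    exact Measurable.stronglyMeasurable (by fun_prop)
  calc μ[fun ω => (a ω + b ω * ξ ω / p ω) ^ 2 | G]
      =ᵐ[μ] μ[(fun ω => a ω ^ 2) + k * ξ | G] := condExp_congr_ae hsplit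
    _ =ᵐ[μ] μ[fun ω => a ω ^ 2 | G] + μ[k * ξ | G] := condExp_add ha2 hkξ G
    _ =ᵐ[μ] (fun ω => a ω ^ 2) + k * p := by
      rw [condExp_of_stronglyMeasurable hG (f := fun ω => a ω ^ 2) (by fun_prop) ha2]
      filter_upwards [condExp_mul_of_stronglyMeasurable_left hk hkξ hξint, hξG] with ω h1 h2
      simp only [Pi.add_apply, h1, Pi.mul_apply, h2]
    _ = fun ω => (a ω + b ω) ^ 2 + ((p ω)⁻¹ - 1) * b ω ^ 2 := by
      funext ω
      have := hp0 ω
      simp only [Pi.add_apply, Pi.mul_apply, k]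
      field_simp
      ring

theorem condExp_sq_add_mul_div_ae_eq_of_le (hmG : m ≤ G) (hG : G ≤ m₀)
    (ha : Measurable[G] a) (hb : Measurable[G] b) (hp : Measurable[m] p) (hp0 : ∀ ω, p ω ≠ 0)
    (hξ : AEStronglyMeasurable ξ μ) (hξ01 : ∀ᵐ ω ∂μ, ξ ω = 0 ∨ ξ ω = 1)
    (hξG : μ[ξ | G] =ᵐ[μ] p) (ha2 : MemLp a 2 μ) (hb2 : MemLp b 2 μ)
    (hg2 : MemLp (fun ω => a ω + b ω * ξ ω / p ω) 2 μ) :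
    μ[fun ω => (a ω + b ω * ξ ω / p ω) ^ 2 | m] =ᵐ[μ]
      μ[fun ω => (a ω + b ω) ^ 2 | m] + (fun ω => (p ω)⁻¹ - 1) * μ[fun ω => b ω ^ 2 | m] := by
  have hab2 : Integrable (fun ω => (a ω + b ω) ^ 2) μ := (ha2.add hb2).integrable_sq
  have hGeq := condExp_sq_add_mul_div_ae_eq hG ha hb (hp.mono hmG le_rfl) hp0 hξ hξ01 hξG
    ha2.integrable_sq hg2.integrable_sq
  -- integrable as the difference of `μ[g² | G]` and `(a + b)²`
  have hweighted : Integrable ((fun ω => (p ω)⁻¹ - 1) * fun ω => b ω ^ 2) μ :=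
    ((integrable_condExp (m := G) (f := fun ω => (a ω + b ω * ξ ω / p ω) ^ 2)).sub
      hab2).congr (hGeq.mono fun ω hω => by simp only [Pi.sub_apply, hω, Pi.mul_apply]; ring)
  calc μ[fun ω => (a ω + b ω * ξ ω / p ω) ^ 2 | m]
      =ᵐ[μ] μ[μ[fun ω => (a ω + b ω * ξ ω / p ω) ^ 2 | G] | m] :=
        (condExp_condExp_of_le hmG hG).symm
    _ =ᵐ[μ] μ[(fun ω => (a ω + b ω) ^ 2) + (fun ω => (p ω)⁻¹ - 1) * fun ω => b ω ^ 2 | m] :=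
        condExp_congr_ae hGeq
    _ =ᵐ[μ] μ[fun ω => (a ω + b ω) ^ 2 | m]
          + μ[(fun ω => (p ω)⁻¹ - 1) * fun ω => b ω ^ 2 | m] :=
        condExp_add hab2 hweighted m
    _ =ᵐ[μ] μ[fun ω => (a ω + b ω) ^ 2 | m]
          + (fun ω => (p ω)⁻¹ - 1) * μ[fun ω => b ω ^ 2 | m] :=
        .add .rfl (condExp_mul_of_stronglyMeasurable_left
          (Measurable.stronglyMeasurable (by fun_prop)) hweighted hb2.integrable_sq)

end InversePropensity

section SecondMoment

variable {α : Type*} {m m₀ : MeasurableSpace α} {μ : Measure[m₀] α} [IsFiniteMeasure μ]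
  {F y : α → ℝ} {c : ℝ}

theorem condExp_sq_sub_const_ae_eq (hm : m ≤ m₀) (hF : MemLp F 2 μ) (hy : MemLp y 2 μ)
    (hyc : μ[y | m] =ᵐ[μ] fun _ => c) :
    μ[fun ω => (y ω - c) ^ 2 | m] =ᵐ[μ] fun ω =>
      μ[fun ω => F ω ^ 2 | m] ω + μ[fun ω => (y ω - F ω) ^ 2 | m] ω
        + 2 * μ[fun ω => F ω * (y ω - F ω) | m] ω - c ^ 2 := by
  have hR : MemLp (y - F) 2 μ := hy.sub hF
  have hF2 : Integrable (F ^ 2) μ := hF.integrable_sq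
  have hR2 : Integrable ((y - F) ^ 2) μ := hR.integrable_sq
  have hFR : Integrable (F * (y - F)) μ := hF.integrable_mul hR
  calc μ[fun ω => (y ω - c) ^ 2 | m]
      =ᵐ[μ] Var[y; μ | m] :=
        condExp_congr_ae (hyc.mono fun ω hω => by simp only [Pi.pow_apply, Pi.sub_apply, hω])
    _ =ᵐ[μ] μ[y ^ 2 | m] - μ[y | m] ^ 2 := condVar_ae_eq_condExp_sq_sub_sq_condExp hm hy
    _ = μ[F ^ 2 + (y - F) ^ 2 + 2 * (F * (y - F)) | m] - μ[y | m] ^ 2 := by congr 2; ring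
    _ =ᵐ[μ] μ[F ^ 2 | m] + μ[(y - F) ^ 2 | m] + 2 * μ[F * (y - F) | m]
          - (fun _ => c) ^ 2 := by
      filter_upwards [hyc, condExp_add (m := m) (hF2.add hR2) (hFR.const_mul 2),
        condExp_add (m := m) hF2 hR2, condExp_ofNat (μ := μ) (m := m) 2 (F * (y - F))]
        with ω h1 h2 h3 h4
      simp only [Pi.add_apply, Pi.sub_apply, Pi.mul_apply, Pi.pow_apply] at h2 h3 h4 ⊢
      rw [h1, ← h3, ← h4]
      exact congrArg (· - c ^ 2) h2
    _ = _ := rfl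

end SecondMoment

theorem add_inv_sub_one_mul_le {V E Φ c₀ c₁ p q : ℝ} (hV : 0 ≤ V) (hc₀ : 0 ≤ c₀)
    (hc₁ : 0 < c₁) (hc₀c₁ : 1 ≤ c₀ * c₁) (hlo : 1 / c₁ * Φ ≤ E) (hhi : E ≤ c₀ * Φ)
    (hp : 0 < p) (hp1 : p ≤ 1) (hq : 0 < q) (hq1 : q ≤ 1) :
    V + (p⁻¹ - 1) * E ≤ c₀ * c₁ * (V + (q⁻¹ - 1) * E) + c₀ * (Φ / p - Φ / q) := by
  have ha : 1 ≤ p⁻¹ := one_le_inv₀ hp |>.2 hp1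
  have hb : 1 ≤ q⁻¹ := one_le_inv₀ hq |>.2 hq1
  have hlo' : Φ ≤ c₁ * E := by rwa [one_div, inv_mul_le_iff₀ hc₁] at hlo
  rw [div_eq_mul_inv, div_eq_mul_inv]
  -- the gap is `(c₀c₁ - 1) V + (q⁻¹ - 1) c₀ (c₁ E - Φ) + (p⁻¹ - 1) (c₀ Φ - E)`
  linarith [mul_nonneg (sub_nonneg.2 hc₀c₁) hV,
    mul_nonneg (sub_nonneg.2 hb) (mul_nonneg hc₀ (sub_nonneg.2 hlo')),
    mul_nonneg (sub_nonneg.2 ha) (sub_nonneg.2 hhi)]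

namespace ActiveQuerySetup

variable (S : ActiveQuerySetup Ω) (s : ℕ)

abbrev pastAndSample : MeasurableSpace Ω :=
  S.ℱ (s - 1) ⊔ MeasurableSpace.comap (fun ω => (S.x s ω, S.y s ω)) inferInstance

theorem measurable_sample : Measurable fun ω => (S.x s ω, S.y s ω) :=
  ((S.hx s).mono (S.ℱ.le s) le_rfl).prodMk ((S.hy s).mono (S.ℱ.le s) le_rfl)

theorem pastAndSample_le : S.pastAndSample s ≤ ‹MeasurableSpace Ω› :=
  sup_le (S.ℱ.le (s - 1)) (S.measurable_sample s).comap_le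

theorem measurable_x_pastAndSample : Measurable[S.pastAndSample s] (S.x s) :=
  (measurable_fst.comp (comap_measurable _)).mono le_sup_right le_rfl

theorem measurable_y_pastAndSample : Measurable[S.pastAndSample s] (S.y s) :=
  (measurable_snd.comp (comap_measurable _)).mono le_sup_right le_rfl

theorem measurable_f_pastAndSample :
    Measurable[S.pastAndSample s] fun ω => S.f s ω (S.x s ω) :=
  (S.hf s).comp ((measurable_id'' le_sup_left).prodMk (S.measurable_x_pastAndSample s))

theorem integral_y : ∫ ω, S.y s ω ∂S.μ = μy S := by
  have h := fun t => integral_map (μ := S.μ) (S.measurable_sample t).aemeasurable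
    (measurable_snd (α := ℝ) (β := ℝ)).aestronglyMeasurable
  rw [μy, ← h s, ← h 1, S.hident s 1]

theorem condExp_y : S.μ[S.y s | S.ℱ (s - 1)] =ᵐ[S.μ] fun _ => μy S := by
  have := S.isProb
  rw [← S.integral_y s]
  exact condExp_indep_eq (S.measurable_sample s).comap_le (S.ℱ.le (s - 1))
    (measurable_snd.comp (comap_measurable _)).stronglyMeasurable (S.hindep s)

theorem measurable_f : Measurable fun ω => S.f s ω (S.x s ω) :=
  (S.measurable_f_pastAndSample s).mono (S.pastAndSample_le s) le_rfl

theorem memLp_f : MemLp (fun ω => S.f s ω (S.x s ω)) 2 S.μ :=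
  (memLp_two_iff_integrable_sq (S.measurable_f s).aestronglyMeasurable).2 (S.hf2int s)

theorem memLp_residual : MemLp (fun ω => S.y s ω - S.f s ω (S.x s ω)) 2 S.μ :=
  (memLp_two_iff_integrable_sq (((S.hy s).mono (S.ℱ.le s) le_rfl).sub
    (S.measurable_f s)).aestronglyMeasurable).2 (S.hr2int s)

theorem memLp_y : MemLp (S.y s) 2 S.μ :=
  ((S.memLp_f s).add (S.memLp_residual s)).ae_eq (ae_of_all _ fun ω => by simp)

theorem memLp_g : MemLp (g S s) 2 S.μ := by
  have hp := (S.hpmeas s).mono (S.ℱ.le (s - 1)) le_rfl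
  have hξ := (S.hξmeas s).mono (S.ℱ.le s) le_rfl
  have hy := (S.hy s).mono (S.ℱ.le s) le_rfl
  have hf := S.measurable_f s
  have hg : Measurable (g S s) := by unfold g; fun_prop
  exact (memLp_two_iff_integrable_sq hg.aestronglyMeasurable).2 (S.hg2int s)

theorem p_pos (ω : Ω) : 0 < S.p s ω := S.hβ.trans_le (S.hpmem s ω).1

theorem condVar_ae_eq : condVar S s =ᵐ[S.μ]
    S.μ[fun ω => (S.y s ω - μy S) ^ 2 | S.ℱ (s - 1)]
      + (fun ω => (S.p s ω)⁻¹ - 1)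
        * S.μ[fun ω => (S.y s ω - S.f s ω (S.x s ω)) ^ 2 | S.ℱ (s - 1)] := by
  have := S.isProb
  have hF := S.measurable_f_pastAndSample s
  have hy := S.measurable_y_pastAndSample s
  have hg : ∀ ω, g S s ω - μy S =
      (S.f s ω (S.x s ω) - μy S) + (S.y s ω - S.f s ω (S.x s ω)) * S.ξ s ω / S.p s ω := by
    intro ω; simp only [g]; ring
  have hg2 : MemLp (fun ω => g S s ω - μy S) 2 S.μ := (S.memLp_g s).sub (memLp_const _)
  simp only [hg] at hg2
  have key := condExp_sq_add_mul_div_ae_eq_of_le (a := fun ω => S.f s ω (S.x s ω) - μy S)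
    (b := fun ω => S.y s ω - S.f s ω (S.x s ω)) le_sup_left (S.pastAndSample_le s)
    (hF.sub measurable_const) (hy.sub hF) (S.hpmeas s) (fun ω => (S.p_pos s ω).ne')
    ((S.hξmeas s).mono (S.ℱ.le s) le_rfl).aestronglyMeasurable (S.hξ01 s) (S.hξcond s)
    ((S.memLp_f s).sub (memLp_const _)) (S.memLp_residual s) hg2
  simp only [sub_add_sub_cancel'] at key
  simpa only [_root_.condVar, hg] using key

theorem condExp_sq_sub_μy :
    S.μ[fun ω => (S.y s ω - μy S) ^ 2 | S.ℱ (s - 1)] =ᵐ[S.μ] fun ω =>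
    S.μ[fun ω' => (S.f s ω' (S.x s ω')) ^ 2 | S.ℱ (s - 1)] ω
      + S.μ[fun ω' => (S.y s ω' - S.f s ω' (S.x s ω')) ^ 2 | S.ℱ (s - 1)] ω
      + 2 * S.μ[fun ω' => S.f s ω' (S.x s ω') * (S.y s ω' - S.f s ω' (S.x s ω'))
        | S.ℱ (s - 1)] ω
      - μy S ^ 2 := by
  have := S.isProb
  exact condExp_sq_sub_const_ae_eq (S.ℱ.le (s - 1)) (S.memLp_f s) (S.memLp_y s)
    (S.condExp_y s)

theorem condVar_le_sigmaStarSq (pstar : ℕ → Ω → ℝ) (t : ℕ)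
    (hq : ∀ ω, pstar t ω ∈ Set.Icc S.β S.τ) :
    ∀ᵐ ω ∂S.μ, condVar S s ω ≤ S.c₀ * S.c₁ * sigmaStarSq S pstar s t ω
      + S.c₀ * (S.Φ s ω / S.p s ω - S.Φ s ω / pstar t ω) := by
  filter_upwards [S.condVar_ae_eq s, S.condExp_sq_sub_μy s,
    condExp_nonneg (m := S.ℱ (s - 1)) (μ := S.μ)
      (ae_of_all _ fun ω => sq_nonneg (S.y s ω - μy S)),
    S.horacle_lo s, S.horacle_hi s] with ω hvar hV hV0 hlo hhi
  have hbound := add_inv_sub_one_mul_le hV0 S.hc₀.le S.hc₁ S.hc₀c₁ hlo hhi (S.p_pos s ω)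
    ((S.hpmem s ω).2.trans S.hτ) (S.hβ.trans_le (hq ω).1) ((hq ω).2.trans S.hτ)
  simp only [hvar, sigmaStarSq, Pi.add_apply, Pi.mul_apply, one_div, hV] at hbound ⊢
  linarith

end ActiveQuerySetup

/-- **Cumulative variance bound (Eq. (28) in the proof of Theorem 6).** Under the oracle
assumption with `c₀ c₁ ≥ 1` and `ℱ_{t−1}`-measurable query probabilities `p_t ∈ [β,τ]`, for
every `t`:
`Σ_{s=1}^t σ_s² ≤ c₀c₁ σ*²_{1:t} + c₀ Regret_t(p*_{1:t})` a.s., where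
`Regret_t(p*_{1:t}) = Σ_{s=1}^t Φ_s(x_s)/p_s − Σ_{s=1}^t Φ_s(x_s)/p*_{1:t}`. -/
theorem cumulative_variance_bound (S : ActiveQuerySetup Ω)
    (pstar : ℕ → Ω → ℝ) (hpstar : IsHindsightBest S pstar) :
    ∀ t, ∀ᵐ ω ∂S.μ,
      (∑ s ∈ Finset.Icc 1 t, condVar S s ω) ≤
        S.c₀ * S.c₁ * ∑ s ∈ Finset.Icc 1 t, sigmaStarSq S pstar s t ω
          + S.c₀ * ((∑ s ∈ Finset.Icc 1 t, S.Φ s ω / S.p s ω)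
              - ∑ s ∈ Finset.Icc 1 t, S.Φ s ω / pstar t ω) := by
  intro t
  have hround : ∀ᵐ ω ∂S.μ, ∀ s, condVar S s ω ≤ S.c₀ * S.c₁ * sigmaStarSq S pstar s t ω
      + S.c₀ * (S.Φ s ω / S.p s ω - S.Φ s ω / pstar t ω) :=
    ae_all_iff.2 fun s => S.condVar_le_sigmaStarSq s pstar t fun ω => (hpstar t ω).1
  filter_upwards [hround] with ω hω
  calc ∑ s ∈ Finset.Icc 1 t, condVar S s ω
      ≤ ∑ s ∈ Finset.Icc 1 t, (S.c₀ * S.c₁ * sigmaStarSq S pstar s t ω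
          + S.c₀ * (S.Φ s ω / S.p s ω - S.Φ s ω / pstar t ω)) :=
        Finset.sum_le_sum fun s _ => hω s
    _ = _ := by
        rw [Finset.sum_add_distrib, ← Finset.mul_sum, ← Finset.mul_sum,
          Finset.sum_sub_distrib]
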